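/- arXiv:1702.05805 — 5 statements merged into one kernel-verified Lean document; each statement's English description precedes it below -/
import Mathlib

section
/- Let F be a CNF formula over a variable set partitioned into U_1 and U_2, each of size n/2. Construct a directed graph G whose vertices are: all 2^{n/2} assignments α to U_1, all 2^{n/2} assignments β to U_2, and for each clause C_i three vertices c_i^{⊨⊨}, c_i^{⊨⊭}, c_i^{⊭⊨}. For each α and clause C_i: if α satisfies C_i, add edges (α, c_i^{⊨⊨}) and (α, c_i^{⊨⊭}); otherwise add edge (α, c_i^{⊭⊨}). For each β and clause C_i: if β satisfies C_i, add edges (c_i^{⊨⊨}, β) and (c_i^{⊭⊨}, β); otherwise add edge (c_i^{⊨⊭}, β). Then for every pair (α, β), the maximum number of pairwise edge-disjoint paths from α to β in G equals the number of clauses C_i satisfied by the combined assignment (α, β). -/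
attribute [local instance] Classical.propDecidable

/-- A feasible `s`-`t` flow in a directed capacitated graph given by `cap`:
capacity constraints on every edge and conservation at every vertex other than `s`, `t`. -/
def IsFlow {V : Type*} [Fintype V] (cap : V → V → ℕ) (s t : V) (f : V → V → ℕ) : Prop :=
  (∀ u v, f u v ≤ cap u v) ∧
  ∀ v, v ≠ s → v ≠ t → ∑ u, f u v = ∑ u, f v u

/-- The maximum `s`-`t` flow value: the supremum of net flow out of `s` over feasible flows. -/
noncomputable def maxFlow {V : Type*} [Fintype V] (cap : V → V → ℕ) (s t : V) : ℕ :=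
  sSup {x : ℕ | ∃ f, IsFlow cap s t f ∧ ∑ v, f s v = x + ∑ v, f v s}

/-- A directed path from `s` to `t` using only edges of positive capacity. -/
def IsPath {V : Type*} (cap : V → V → ℕ) (s t : V) (p : List V) : Prop :=
  p.Chain' (fun u v => cap u v ≠ 0) ∧ p.head? = some s ∧ p.getLast? = some t

/-- The (directed) edges traversed by a path. -/
def pathEdges {V : Type*} (p : List V) : List (V × V) := p.zip p.tail

/-- The maximum number of pairwise edge-disjoint directed `s`-`t` paths. -/
noncomputable def maxEDP {V : Type*} (cap : V → V → ℕ) (s t : V) : ℕ :=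
  sSup {k : ℕ | ∃ ps : List (List V), ps.length = k ∧
    (∀ p ∈ ps, IsPath cap s t p ∧ (pathEdges p).Nodup) ∧
    ps.Pairwise (fun p q => ∀ e ∈ pathEdges p, e ∉ pathEdges q)}

/-- A CNF clause over variables `U1 ⊕ U2`: a finite set of literals (variable, polarity). -/
abbrev Clause2 (U1 U2 : Type*) := Finset ((U1 ⊕ U2) × Bool)

/-- The assignment `α` to the variables `U1` satisfies the clause `C`. -/
def satA {U1 U2 : Type*} (α : U1 → Bool) (C : Clause2 U1 U2) : Prop :=
  ∃ l ∈ C, ∃ x : U1, l.1 = Sum.inl x ∧ α x = l.2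

/-- The assignment `β` to the variables `U2` satisfies the clause `C`. -/
def satB {U1 U2 : Type*} (β : U2 → Bool) (C : Clause2 U1 U2) : Prop :=
  ∃ l ∈ C, ∃ x : U2, l.1 = Sum.inr x ∧ β x = l.2

/-- Vertices of the Global Max-Flow reduction graph: assignments to `U1`, assignments
to `U2`, and for each clause `i` three clause vertices: `(i, 0)` is `c_i^{⊨⊨}`,
`(i, 1)` is `c_i^{⊨⊭}`, `(i, 2)` is `c_i^{⊭⊨}`. -/
abbrev RV (U1 U2 : Type*) (m : ℕ) := (U1 → Bool) ⊕ (U2 → Bool) ⊕ (Fin m × Fin 3)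

/-- Unit-capacity edges of the Global Max-Flow reduction graph: if `α ⊨ C_i`, edges
`(α, c_i^{⊨⊨})` and `(α, c_i^{⊨⊭})`, else edge `(α, c_i^{⊭⊨})`; if `β ⊨ C_i`, edges
`(c_i^{⊨⊨}, β)` and `(c_i^{⊭⊨}, β)`, else edge `(c_i^{⊨⊭}, β)`. -/
noncomputable def redCap {U1 U2 : Type*} {m : ℕ} (F : Fin m → Clause2 U1 U2) :
    RV U1 U2 m → RV U1 U2 m → ℕ
  | Sum.inl α, Sum.inr (Sum.inr (i, j)) =>
      if (j = 0 ∨ j = 1) ∧ satA α (F i) then 1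
      else if j = 2 ∧ ¬ satA α (F i) then 1 else 0
  | Sum.inr (Sum.inr (i, j)), Sum.inr (Sum.inl β) =>
      if (j = 0 ∨ j = 2) ∧ satB β (F i) then 1
      else if j = 1 ∧ ¬ satB β (F i) then 1 else 0
  | _, _ => 0

/-! Edges only lead from assignments to `U1`, to clause vertices, to assignments to `U2`, so
every `α`-`β` path has exactly two edges, through a clause vertex `c_i^{ab}`. For each clause
`i`, the vertex `c_i^{ab}` is joined to both `α` and `β` exactly when `a` records whether
`α ⊨ C_i`, `b` whether `β ⊨ C_i`, and `(a, b) ≠ (⊭, ⊭)`; so the two-edge paths are one per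
satisfied clause, and they are pairwise edge-disjoint. -/

section TwoEdgePaths

variable {V : Type*} {cap : V → V → ℕ} {s t : V}

lemma isPath_iff_isChain {p : List V} : IsPath cap s t p ↔
    p.IsChain (fun u v => cap u v ≠ 0) ∧ p.head? = some s ∧ p.getLast? = some t :=
  Iff.rfl

lemma isPath_pair_iff {v : V} :
    IsPath cap s t [s, v, t] ↔ cap s v ≠ 0 ∧ cap v t ≠ 0 := by
  simp [isPath_iff_isChain, List.isChain_cons_cons]

lemma pathEdges_pair (v : V) : pathEdges [s, v, t] = [(s, v), (v, t)] := rfl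

lemma pathEdges_pair_disjoint {v w : V} (hvw : v ≠ w) (hvs : v ≠ s) (hvt : v ≠ t) :
    ∀ e ∈ pathEdges [s, v, t], e ∉ pathEdges [s, w, t] := by
  intro e he he'
  simp only [pathEdges_pair, List.mem_cons, List.not_mem_nil, or_false] at he he'
  rcases he with rfl | rfl <;> rcases he' with he' | he' <;> simp only [Prod.mk.injEq] at he'
  · exact hvw he'.2
  · exact hvt he'.2
  · exact hvs he'.1
  · exact hvw he'.1

theorem maxEDP_eq_card_of_forall_isPath (h : ∀ p, IsPath cap s t p → ∃ v, p = [s, v, t])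
    (M : Finset V) (hM : ∀ v, v ∈ M ↔ cap s v ≠ 0 ∧ cap v t ≠ 0) :
    maxEDP cap s t = M.card := by
  have hcap : cap s t = 0 := by
    by_contra hne
    obtain ⟨v, hv⟩ := h [s, t] (by simp [isPath_iff_isChain, hne])
    simp at hv
  have mid_ne {v} (hv : v ∈ M) : v ≠ s ∧ v ≠ t := by
    rw [hM] at hv
    exact ⟨by rintro rfl; exact hv.2 hcap, by rintro rfl; exact hv.1 hcap⟩
  set achievable : Set ℕ := {k | ∃ ps : List (List V), ps.length = k ∧
    (∀ p ∈ ps, IsPath cap s t p ∧ (pathEdges p).Nodup) ∧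
    ps.Pairwise (fun p q => ∀ e ∈ pathEdges p, e ∉ pathEdges q)}
  have card_mem : M.card ∈ achievable := by
    refine ⟨M.toList.map fun v => [s, v, t], by simp, ?_, ?_⟩
    · simp only [List.mem_map, Finset.mem_toList]
      rintro _ ⟨v, hv, rfl⟩
      refine ⟨isPath_pair_iff.2 ((hM v).1 hv), ?_⟩
      simp [pathEdges_pair, Ne.symm (mid_ne hv).1]
    · refine List.pairwise_map.2 (M.nodup_toList.imp_of_mem fun hv _ hvw => ?_)
      obtain ⟨hvs, hvt⟩ := mid_ne (Finset.mem_toList.1 hv)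
      exact pathEdges_pair_disjoint hvw hvs hvt
  have le_card : ∀ k ∈ achievable, k ≤ M.card := by
    rintro k ⟨ps, rfl, hpath, hdisj⟩
    have hform : ∀ p ∈ ps, ∃ v ∈ M, p = [s, v, t] := by
      intro p hp
      obtain ⟨v, rfl⟩ := h p (hpath p hp).1
      exact ⟨v, (hM v).2 (isPath_pair_iff.1 (hpath _ hp).1), rfl⟩
    have hnd : ps.Nodup := hdisj.imp_of_mem fun hp _ hpq hEq => by
      obtain ⟨v, -, rfl⟩ := hform _ hp
      exact hpq (s, v) (by simp [pathEdges_pair]) (by simp [← hEq, pathEdges_pair])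
    calc ps.length = ps.toFinset.card := (List.toFinset_card_of_nodup hnd).symm
      _ ≤ (M.image fun v => [s, v, t]).card := Finset.card_le_card fun p hp => by
          obtain ⟨v, hv, rfl⟩ := hform p (List.mem_toFinset.1 hp)
          exact Finset.mem_image_of_mem _ hv
      _ ≤ M.card := Finset.card_image_le
  exact le_antisymm (csSup_le ⟨_, card_mem⟩ le_card) (le_csSup ⟨_, le_card⟩ card_mem)

end TwoEdgePaths

section Reduction

variable {U1 U2 : Type*} {m : ℕ} (F : Fin m → Clause2 U1 U2) (α : U1 → Bool) (β : U2 → Bool)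

noncomputable def clauseVertex (i : Fin m) : RV U1 U2 m :=
  Sum.inr (Sum.inr (i, if satA α (F i) then (if satB β (F i) then 0 else 1) else 2))

lemma clauseVertex_injective : Function.Injective (clauseVertex F α β) := by
  intro i i' h
  simp only [clauseVertex, Sum.inr.injEq, Prod.mk.injEq] at h
  exact h.1

lemma isPath_redCap {p : List (RV U1 U2 m)}
    (h : IsPath (redCap F) (Sum.inl α) (Sum.inr (Sum.inl β)) p) :
    ∃ v, p = [Sum.inl α, v, Sum.inr (Sum.inl β)] := by
  obtain ⟨hc, hh, hl⟩ := isPath_iff_isChain.1 h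
  rcases p with _ | ⟨a, _ | ⟨b, _ | ⟨c, _ | ⟨d, rest⟩⟩⟩⟩
  all_goals simp only [List.head?_cons, Option.some.injEq, List.head?_nil, reduceCtorEq] at hh
  all_goals subst hh
  · simp at hl
  · simp only [List.getLast?_cons_cons, List.getLast?_singleton, Option.some.injEq] at hl
    subst hl
    simp [List.isChain_cons_cons, redCap] at hc
  · simp only [List.getLast?_cons_cons, List.getLast?_singleton, Option.some.injEq] at hl
    exact ⟨b, hl ▸ rfl⟩
  · simp only [List.isChain_cons_cons] at hc
    obtain ⟨hab, hbc, hcd, -⟩ := hc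
    rcases b with _ | _ | b <;> simp [redCap] at hab
    rcases c with _ | c | _ <;> simp [redCap] at hbc
    rcases d with _ | _ | _ <;> simp [redCap] at hcd

lemma redCap_ne_zero_and_ne_zero_iff {v : RV U1 U2 m} :
    redCap F (Sum.inl α) v ≠ 0 ∧ redCap F v (Sum.inr (Sum.inl β)) ≠ 0 ↔
      ∃ i, (satA α (F i) ∨ satB β (F i)) ∧ clauseVertex F α β i = v := by
  rcases v with _ | _ | ⟨i, j⟩
  · simp [redCap, clauseVertex]
  · simp [redCap, clauseVertex]
  · simp only [redCap, Fin.isValue, ne_eq, clauseVertex, Sum.inr.injEq, Prod.mk.injEq,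
      ↓existsAndEq, true_and]
    by_cases hA : satA α (F i) <;> by_cases hB : satB β (F i) <;> fin_cases j <;> simp [hA, hB]

end Reduction

theorem stmt2_general {U1 U2 : Type*}
    {m : ℕ} (F : Fin m → Clause2 U1 U2) (α : U1 → Bool) (β : U2 → Bool) :
    maxEDP (redCap F) (Sum.inl α) (Sum.inr (Sum.inl β)) =
      (Finset.univ.filter fun i => satA α (F i) ∨ satB β (F i)).card := by
  rw [maxEDP_eq_card_of_forall_isPath (fun _ => isPath_redCap F α β)
    ((Finset.univ.filter fun i => satA α (F i) ∨ satB β (F i)).map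
      ⟨clauseVertex F α β, clauseVertex_injective F α β⟩), Finset.card_map]
  intro v
  simp [redCap_ne_zero_and_ne_zero_iff]

/-- in the reduction graph built from the CNF formula `F`, for every pair
`(α, β)`, the maximum number of pairwise edge-disjoint directed paths from `α` to `β`
equals the number of clauses satisfied by the combined assignment `(α, β)`. -/
theorem stmt2 {U1 U2 : Type*} [Fintype U1] [DecidableEq U1] [Fintype U2] [DecidableEq U2]
    {m : ℕ} (F : Fin m → Clause2 U1 U2) (α : U1 → Bool) (β : U2 → Bool) :
    maxEDP (redCap F) (Sum.inl α) (Sum.inr (Sum.inl β)) =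
      (Finset.univ.filter fun i => satA α (F i) ∨ satB β (F i)).card :=
  stmt2_general F α β
end

section
/- In the Global Max-Flow reduction graph (as in the previous construction) for a CNF formula with m clauses and n variables, for every clause C_i and every pair of assignments (α, β), there is at most one directed path from α to β whose internal vertices are among {c_i^{⊨⊨}, c_i^{⊨⊭}, c_i^{⊭⊨}}, and such a path exists if and only if α satisfies C_i or β satisfies C_i. -/
attribute [local instance] Classical.propDecidable

/-
An edge of the reduction graph leads from an assignment to `U1` into a clause vertex, or from a
clause vertex to an assignment to `U2`. Hence every path from `α` to `β` is `α → c → β` for a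
single clause vertex `c`. Among the three vertices of `C_i`, both edges are present exactly for
`c_i^{⊨⊨}` when `α` and `β` satisfy `C_i`, for `c_i^{⊨⊭}` when only `α` does, for `c_i^{⊭⊨}` when
only `β` does, and for none of them when neither does.
-/

section ReductionGraph

variable {U1 U2 : Type*} {m : ℕ} (F : Fin m → Clause2 U1 U2)

theorem eq_clause_of_redCap_inl_ne_zero {α : U1 → Bool} {v : RV U1 U2 m}
    (h : redCap F (Sum.inl α) v ≠ 0) : ∃ i j, v = Sum.inr (Sum.inr (i, j)) := by
  rcases v with _ | _ | ⟨i, j⟩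
  · simp [redCap] at h
  · simp [redCap] at h
  · exact ⟨i, j, rfl⟩

theorem eq_inr_inl_of_redCap_clause_ne_zero {i : Fin m} {j : Fin 3} {v : RV U1 U2 m}
    (h : redCap F (Sum.inr (Sum.inr (i, j))) v ≠ 0) : ∃ β, v = Sum.inr (Sum.inl β) := by
  rcases v with _ | β | _
  · simp [redCap] at h
  · exact ⟨β, rfl⟩
  · simp [redCap] at h

theorem redCap_inr_inl_eq_zero (β : U2 → Bool) (v : RV U1 U2 m) :
    redCap F (Sum.inr (Sum.inl β)) v = 0 := by
  rcases v with _ | _ | _ <;> rfl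

theorem isPath_redCap_iff {α : U1 → Bool} {β : U2 → Bool} {p : List (RV U1 U2 m)} :
    IsPath (redCap F) (Sum.inl α) (Sum.inr (Sum.inl β)) p ↔
      ∃ i j, p = [Sum.inl α, Sum.inr (Sum.inr (i, j)), Sum.inr (Sum.inl β)] ∧
        redCap F (Sum.inl α) (Sum.inr (Sum.inr (i, j))) ≠ 0 ∧
        redCap F (Sum.inr (Sum.inr (i, j))) (Sum.inr (Sum.inl β)) ≠ 0 := by
  refine ⟨fun hp => ?_, ?_⟩
  · obtain ⟨hchain, hhead, hlast⟩ := hp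
    change p.IsChain _ at hchain
    rcases p with _ | ⟨a, _ | ⟨v, _ | ⟨w, _ | ⟨u, r⟩⟩⟩⟩
    · simp at hhead
    · simp only [List.head?_cons, List.getLast?_singleton, Option.some.injEq] at hhead hlast
      exact (Sum.inl_ne_inr (hhead.symm.trans hlast)).elim
    · simp only [List.head?_cons, List.getLast?_cons_cons, List.getLast?_singleton,
        Option.some.injEq] at hhead hlast
      subst hhead hlast
      exact (List.isChain_pair.1 hchain rfl).elim
    · simp only [List.head?_cons, List.getLast?_cons_cons, List.getLast?_singleton,
        Option.some.injEq] at hhead hlast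
      subst hhead hlast
      obtain ⟨h₁, h₂⟩ := List.isChain_cons_cons.1 hchain
      replace h₂ := List.isChain_pair.1 h₂
      obtain ⟨i, j, rfl⟩ := eq_clause_of_redCap_inl_ne_zero F h₁
      exact ⟨i, j, rfl, h₁, h₂⟩
    · simp only [List.head?_cons, Option.some.injEq] at hhead
      subst hhead
      simp only [List.isChain_cons_cons] at hchain
      obtain ⟨h₁, h₂, h₃, -⟩ := hchain
      obtain ⟨i, j, rfl⟩ := eq_clause_of_redCap_inl_ne_zero F h₁
      obtain ⟨β', rfl⟩ := eq_inr_inl_of_redCap_clause_ne_zero F h₂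
      exact absurd (redCap_inr_inl_eq_zero F β' u) h₃
  · rintro ⟨i, j, rfl, h₁, h₂⟩
    exact ⟨List.isChain_cons_cons.2 ⟨h₁, List.isChain_pair.2 h₂⟩, rfl, rfl⟩

noncomputable def middleIndex (α : U1 → Bool) (β : U2 → Bool) (C : Clause2 U1 U2) : Fin 3 :=
  if satA α C then if satB β C then 0 else 1 else 2

theorem redCap_through_clause_ne_zero_iff (α : U1 → Bool) (β : U2 → Bool) (i : Fin m)
    (j : Fin 3) :
    (redCap F (Sum.inl α) (Sum.inr (Sum.inr (i, j))) ≠ 0 ∧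
      redCap F (Sum.inr (Sum.inr (i, j))) (Sum.inr (Sum.inl β)) ≠ 0) ↔
      (satA α (F i) ∨ satB β (F i)) ∧ j = middleIndex α β (F i) := by
  by_cases hA : satA α (F i) <;> by_cases hB : satB β (F i) <;>
    fin_cases j <;> simp [redCap, middleIndex, hA, hB]

theorem isPath_redCap_through_clause_iff (α : U1 → Bool) (β : U2 → Bool) (i : Fin m)
    (p : List (RV U1 U2 m)) :
    (IsPath (redCap F) (Sum.inl α) (Sum.inr (Sum.inl β)) p ∧
      ∀ v ∈ p, v ≠ Sum.inl α → v ≠ Sum.inr (Sum.inl β) →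
        ∃ j : Fin 3, v = Sum.inr (Sum.inr (i, j))) ↔
      (satA α (F i) ∨ satB β (F i)) ∧
        p = [Sum.inl α, Sum.inr (Sum.inr (i, middleIndex α β (F i))), Sum.inr (Sum.inl β)] := by
  rw [isPath_redCap_iff]
  constructor
  · rintro ⟨⟨i', j, rfl, hedges⟩, hinternal⟩
    obtain ⟨j', hj'⟩ := hinternal (Sum.inr (Sum.inr (i', j))) (by simp) (by simp) (by simp)
    obtain ⟨rfl, -⟩ := Prod.mk.inj (Sum.inr_injective (Sum.inr_injective hj'))
    obtain ⟨hsat, rfl⟩ := (redCap_through_clause_ne_zero_iff F α β i' j).1 hedges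
    exact ⟨hsat, rfl⟩
  · rintro ⟨hsat, rfl⟩
    refine ⟨⟨i, _, rfl, (redCap_through_clause_ne_zero_iff F α β i _).2 ⟨hsat, rfl⟩⟩, ?_⟩
    simp

end ReductionGraph

theorem stmt3_general {U1 U2 : Type*} {m : ℕ} (F : Fin m → Clause2 U1 U2) (α : U1 → Bool) (β : U2 → Bool)
    (i : Fin m) :
    let P : Set (List (RV U1 U2 m)) :=
      {p | IsPath (redCap F) (Sum.inl α) (Sum.inr (Sum.inl β)) p ∧
        ∀ v ∈ p, v ≠ Sum.inl α → v ≠ Sum.inr (Sum.inl β) →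
          ∃ j : Fin 3, v = Sum.inr (Sum.inr (i, j))}
    P.Subsingleton ∧ (P.Nonempty ↔ satA α (F i) ∨ satB β (F i)) := by
  intro P
  have hP : P = {p | (satA α (F i) ∨ satB β (F i)) ∧
      p = [Sum.inl α, Sum.inr (Sum.inr (i, middleIndex α β (F i))), Sum.inr (Sum.inl β)]} :=
    Set.ext (isPath_redCap_through_clause_iff F α β i)
  rw [hP]
  exact ⟨Set.subsingleton_of_subset_singleton fun p hp => hp.2,
    ⟨fun ⟨_, hp⟩ => hp.1, fun hsat => ⟨_, hsat, rfl⟩⟩⟩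

/-- for every clause `C_i` and pair `(α, β)`, there is at most one directed
path from `α` to `β` in the reduction graph whose internal vertices are among the three
clause vertices of `C_i`, and such a path exists iff `α ⊨ C_i` or `β ⊨ C_i`. -/
theorem stmt3 {U1 U2 : Type*} [Fintype U1] [DecidableEq U1] [Fintype U2] [DecidableEq U2]
    {m : ℕ} (F : Fin m → Clause2 U1 U2) (α : U1 → Bool) (β : U2 → Bool) (i : Fin m) :
    let P : Set (List (RV U1 U2 m)) :=
      {p | IsPath (redCap F) (Sum.inl α) (Sum.inr (Sum.inl β)) p ∧
        ∀ v ∈ p, v ≠ Sum.inl α → v ≠ Sum.inr (Sum.inl β) →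
          ∃ j : Fin 3, v = Sum.inr (Sum.inr (i, j))}
    P.Subsingleton ∧ (P.Nonempty ↔ satA α (F i) ∨ satB β (F i)) :=
  stmt3_general F α β i
end

section
/- Consider the capacitated reduction gadget for a fixed triple of partial assignments (α, β, γ) and CNF clauses C_1, ..., C_m, where the subgraph restricted to β consists of: vertex α; for each i, vertices C_i^⊨, C_i^⊭ in a clause layer; vertices β_i^l, β_i^c, β_i^r for each i; vertex β'; vertex v_B; vertex γ; with edges: (α, C_i^⊨) of capacity w if α ⊨ C_i, else (α, C_i^⊭) of capacity w; (C_i^⊨, β_i^c) capacity 1; (C_i^⊭, β_i^l) capacity 1; (β_i^l, β_i^r) capacity 1 present iff β ⊭ C_i; (β_i^l, β_i^c) capacity 1; (β_i^c, β') capacity 1; (β_i^r, C_i) capacity 1; (C_i, γ) of capacity w present iff γ ⊭ C_i; (β', v_B) capacity p−1; (v_B, γ) capacity w(p−1). If the triple (α, β, γ) satisfies at most p−1 clauses (i.e., at least m−p+1 clauses are unsatisfied by all three), then the maximum α-γ flow in this gadget is at least m. -/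
attribute [local instance] Classical.propDecidable

/-- A CNF clause over variables `U1 ⊕ U2 ⊕ U3`. -/
abbrev Clause3 (U1 U2 U3 : Type*) := Finset ((U1 ⊕ U2 ⊕ U3) × Bool)

/-- The assignment `a` to `U1` satisfies the clause `C`. -/
def sat3A {U1 U2 U3 : Type*} (a : U1 → Bool) (C : Clause3 U1 U2 U3) : Prop :=
  ∃ l ∈ C, ∃ x : U1, l.1 = Sum.inl x ∧ a x = l.2

/-- The assignment `b` to `U2` satisfies the clause `C`. -/
def sat3B {U1 U2 U3 : Type*} (b : U2 → Bool) (C : Clause3 U1 U2 U3) : Prop :=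
  ∃ l ∈ C, ∃ x : U2, l.1 = Sum.inr (Sum.inl x) ∧ b x = l.2

/-- The assignment `g` to `U3` satisfies the clause `C`. -/
def sat3G {U1 U2 U3 : Type*} (g : U3 → Bool) (C : Clause3 U1 U2 U3) : Prop :=
  ∃ l ∈ C, ∃ x : U3, l.1 = Sum.inr (Sum.inr x) ∧ g x = l.2

/-- Vertices of the capacitated reduction gadget (for a fixed triple `(α, β, γ)`). -/
inductive GadV (m : ℕ) where
  | src                 -- α
  | snk                 -- γ
  | vB                  -- v_B
  | bp                  -- β'
  | Csat (i : Fin m)    -- C_i^⊨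
  | Cun (i : Fin m)     -- C_i^⊭
  | Cb (i : Fin m)      -- C_i
  | bl (i : Fin m)      -- β_i^l
  | bc (i : Fin m)      -- β_i^c
  | br (i : Fin m)      -- β_i^r
  deriving DecidableEq, Fintype

/-- Capacities of the gadget, where `sA i`, `sB i`, `sG i` mean `α ⊨ C_i`, `β ⊨ C_i`,
`γ ⊨ C_i` respectively, `w` is the capacity parameter and `p` the threshold. -/
noncomputable def gcap {m : ℕ} (sA sB sG : Fin m → Prop) (w p : ℕ) : GadV m → GadV m → ℕ
  | .src, .Csat i => if sA i then w else 0
  | .src, .Cun i => if sA i then 0 else w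
  | .Csat i, .bc j => if i = j then 1 else 0
  | .Cun i, .bl j => if i = j then 1 else 0
  | .bl i, .br j => if i = j ∧ ¬ sB i then 1 else 0
  | .bl i, .bc j => if i = j then 1 else 0
  | .bc _, .bp => 1
  | .br i, .Cb j => if i = j then 1 else 0
  | .Cb i, .snk => if ¬ sG i then w else 0
  | .bp, .vB => p - 1
  | .vB, .snk => w * (p - 1)
  | _, _ => 0

/-! Every clause sends one unit from `α`, through `C_i^⊨` if `α ⊨ C_i` and through `C_i^⊭`,
`β_i^l` otherwise. A clause satisfied by `α`, `β` or `γ` then continues through `β_i^c`, `β'` and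
`v_B`; by hypothesis at most `p - 1` units take this route, which fits the capacities `p - 1` of
`(β', v_B)` and `w (p - 1)` of `(v_B, γ)`.
A clause satisfied by none of the three continues through `β_i^r` and `C_i`, and both edges on
that route are present precisely because `β ⊭ C_i` and `γ ⊭ C_i`. -/

theorem le_maxFlow_of_isFlow {V : Type*} [Fintype V] {cap : V → V → ℕ} {s t : V}
    {f : V → V → ℕ} {x : ℕ} (hf : IsFlow cap s t f) (hx : ∑ v, f s v = x + ∑ v, f v s) :
    x ≤ maxFlow cap s t := by
  refine le_csSup ⟨∑ v, cap s v, ?_⟩ ⟨f, hf, hx⟩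
  rintro y ⟨f', hf', hy⟩
  calc y ≤ y + ∑ v, f' v s := Nat.le_add_right _ _
    _ = ∑ v, f' s v := hy.symm
    _ ≤ ∑ v, cap s v := Finset.sum_le_sum fun v _ => hf'.1 s v

namespace GadV

def equivSum (m : ℕ) : GadV m ≃
    (Unit ⊕ Unit ⊕ Unit ⊕ Unit ⊕ Fin m ⊕ Fin m ⊕ Fin m ⊕ Fin m ⊕ Fin m ⊕ Fin m) where
  toFun
    | .src => .inl ()
    | .snk => .inr (.inl ())
    | .vB => .inr (.inr (.inl ()))
    | .bp => .inr (.inr (.inr (.inl ())))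
    | .Csat i => .inr (.inr (.inr (.inr (.inl i))))
    | .Cun i => .inr (.inr (.inr (.inr (.inr (.inl i)))))
    | .Cb i => .inr (.inr (.inr (.inr (.inr (.inr (.inl i))))))
    | .bl i => .inr (.inr (.inr (.inr (.inr (.inr (.inr (.inl i)))))))
    | .bc i => .inr (.inr (.inr (.inr (.inr (.inr (.inr (.inr (.inl i))))))))
    | .br i => .inr (.inr (.inr (.inr (.inr (.inr (.inr (.inr (.inr i))))))))
  invFun
    | .inl () => .src
    | .inr (.inl ()) => .snk
    | .inr (.inr (.inl ())) => .vB
    | .inr (.inr (.inr (.inl ()))) => .bp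
    | .inr (.inr (.inr (.inr (.inl i)))) => .Csat i
    | .inr (.inr (.inr (.inr (.inr (.inl i))))) => .Cun i
    | .inr (.inr (.inr (.inr (.inr (.inr (.inl i)))))) => .Cb i
    | .inr (.inr (.inr (.inr (.inr (.inr (.inr (.inl i))))))) => .bl i
    | .inr (.inr (.inr (.inr (.inr (.inr (.inr (.inr (.inl i)))))))) => .bc i
    | .inr (.inr (.inr (.inr (.inr (.inr (.inr (.inr (.inr i)))))))) => .br i
  left_inv v := by cases v <;> rfl
  right_inv t := by rcases t with ⟨⟩ | ⟨⟩ | ⟨⟩ | ⟨⟩ | i | i | i | i | i | i <;> rfl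

theorem sum_univ {m : ℕ} {M : Type*} [AddCommMonoid M] (h : GadV m → M) :
    ∑ v, h v = h .src + h .snk + h .vB + h .bp + ∑ i, h (.Csat i) + ∑ i, h (.Cun i)
      + ∑ i, h (.Cb i) + ∑ i, h (.bl i) + ∑ i, h (.bc i) + ∑ i, h (.br i) := by
  rw [← (equivSum m).symm.sum_comp h]
  simp [Fintype.sum_sum_type, equivSum, add_assoc]

end GadV

section GadgetFlow

variable {m : ℕ} (sA sB sG : Fin m → Prop)

noncomputable def gadgetFlow : GadV m → GadV m → ℕ
  | .src, .Csat i => if sA i then 1 else 0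
  | .src, .Cun i => if sA i then 0 else 1
  | .Csat i, .bc j => if i = j ∧ sA i then 1 else 0
  | .Cun i, .bl j => if i = j ∧ ¬ sA i then 1 else 0
  | .bl i, .br j => if i = j ∧ ¬ sA i ∧ ¬ sB i ∧ ¬ sG i then 1 else 0
  | .bl i, .bc j => if i = j ∧ ¬ sA i ∧ (sB i ∨ sG i) then 1 else 0
  | .bc i, .bp => if sA i ∨ sB i ∨ sG i then 1 else 0
  | .br i, .Cb j => if i = j ∧ ¬ sA i ∧ ¬ sB i ∧ ¬ sG i then 1 else 0
  | .Cb i, .snk => if ¬ sA i ∧ ¬ sB i ∧ ¬ sG i then 1 else 0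
  | .bp, .vB => (Finset.univ.filter fun i => sA i ∨ sB i ∨ sG i).card
  | .vB, .snk => (Finset.univ.filter fun i => sA i ∨ sB i ∨ sG i).card
  | _, _ => 0

theorem gadgetFlow_le_gcap {w p : ℕ} (hw : 1 ≤ w)
    (hsat : (Finset.univ.filter fun i => sA i ∨ sB i ∨ sG i).card ≤ p - 1) (u v : GadV m) :
    gadgetFlow sA sB sG u v ≤ gcap sA sB sG w p u v := by
  have hvB : (Finset.univ.filter fun i => sA i ∨ sB i ∨ sG i).card ≤ w * (p - 1) :=
    hsat.trans (Nat.le_mul_of_pos_left _ hw)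
  cases u <;> cases v <;> simp only [gadgetFlow, gcap, le_refl] <;>
    first
      | assumption
      | split_ifs <;> first | omega | (exfalso; tauto)

theorem gadgetFlow_conserve (v : GadV m) (hs : v ≠ .src) (ht : v ≠ .snk) :
    ∑ u, gadgetFlow sA sB sG u v = ∑ u, gadgetFlow sA sB sG v u := by
  cases v with
  | src => exact absurd rfl hs
  | snk => exact absurd rfl ht
  | _ =>
    rw [GadV.sum_univ, GadV.sum_univ]
    simp only [gadgetFlow, Finset.sum_ite_eq, Finset.sum_ite_eq', Finset.mem_univ, if_true,
      ite_and, Finset.sum_const_zero, Finset.card_filter, add_zero, zero_add]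
    all_goals split_ifs <;> first | rfl | omega | (exfalso; tauto)

theorem isFlow_gadgetFlow {w p : ℕ} (hw : 1 ≤ w)
    (hsat : (Finset.univ.filter fun i => sA i ∨ sB i ∨ sG i).card ≤ p - 1) :
    IsFlow (gcap sA sB sG w p) .src .snk (gadgetFlow sA sB sG) :=
  ⟨gadgetFlow_le_gcap sA sB sG hw hsat, gadgetFlow_conserve sA sB sG⟩

theorem sum_gadgetFlow_src_out : ∑ v, gadgetFlow sA sB sG .src v = m := by
  rw [GadV.sum_univ]
  simp only [gadgetFlow, Finset.sum_const_zero, add_zero, zero_add, ← Finset.sum_add_distrib]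
  have hunit : ∀ i, (if sA i then 1 else 0) + (if sA i then 0 else 1) = 1 := by
    intro i; split_ifs <;> rfl
  simp [hunit]

theorem sum_gadgetFlow_src_in : ∑ v, gadgetFlow sA sB sG v .src = 0 := by
  rw [GadV.sum_univ]
  simp [gadgetFlow]

end GadgetFlow

theorem stmt6_general {U1 U2 U3 : Type*} {m : ℕ} (F : Fin m → Clause3 U1 U2 U3)
    (a : U1 → Bool) (b : U2 → Bool) (g : U3 → Bool) (w p : ℕ)
    (hw : 1 ≤ w)
    (hsat : (Finset.univ.filter fun i =>
        sat3A a (F i) ∨ sat3B b (F i) ∨ sat3G g (F i)).card ≤ p - 1) :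
    m ≤ maxFlow
        (gcap (fun i => sat3A a (F i)) (fun i => sat3B b (F i)) (fun i => sat3G g (F i)) w p)
        GadV.src GadV.snk := by
  refine le_maxFlow_of_isFlow (isFlow_gadgetFlow _ _ _ hw hsat) ?_
  rw [sum_gadgetFlow_src_out, sum_gadgetFlow_src_in, add_zero]

/-- if the triple `(α, β, γ)` satisfies at most `p - 1` of the `m` clauses,
then the maximum `α`-`γ` flow in the capacitated gadget is at least `m`. -/
theorem stmt6 {U1 U2 U3 : Type*} {m : ℕ} (F : Fin m → Clause3 U1 U2 U3)
    (a : U1 → Bool) (b : U2 → Bool) (g : U3 → Bool) (w p : ℕ)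
    (hw : 1 ≤ w) (hp1 : 1 ≤ p) (hpm : p ≤ m)
    (hsat : (Finset.univ.filter fun i =>
        sat3A a (F i) ∨ sat3B b (F i) ∨ sat3G g (F i)).card ≤ p - 1) :
    m ≤ maxFlow
        (gcap (fun i => sat3A a (F i)) (fun i => sat3B b (F i)) (fun i => sat3G g (F i)) w p)
        GadV.src GadV.snk :=
  stmt6_general F a b g w p hw hsat
end

section
/- In the uncapacitated reduction gadget G_p^{α,β,γ}: vertices are α; β_i^l, β_i^r for i ∈ [m]; β'; β'_j for j ∈ [p−1]; and γ; with unit-capacity edges: (α, β_i^l) present iff both α ⊭ C_i and β ⊭ C_i; (α, β_i^r) present iff α ⊨ C_i or β ⊨ C_i; (β_i^l, γ) present iff additionally γ ⊭ C_i (as well as the (α, β_i^l)-condition); (β_i^l, β_i^r) for all i; (β_i^r, β') for all i; (β', β'_j) for all j ∈ [p−1]; (β'_j, γ) for all j ∈ [p−1]. If the combined assignment (α, β, γ) satisfies at least p clauses, then the maximum α-γ flow in G_p^{α,β,γ} is at most m − 1. -/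
attribute [local instance] Classical.propDecidable

/-- Vertices of the uncapacitated reduction gadget `G_p^{α,β,γ}`. -/
inductive UGadV (m p : ℕ) where
  | src                    -- α
  | snk                    -- γ
  | bp                     -- β'
  | bl (i : Fin m)         -- β_i^l
  | br (i : Fin m)         -- β_i^r
  | bpj (j : Fin (p - 1))  -- β'_j
  deriving DecidableEq, Fintype

/-- Unit-capacity edges of `G_p^{α,β,γ}`, with `sA i`, `sB i`, `sG i` meaning
`α ⊨ C_i`, `β ⊨ C_i`, `γ ⊨ C_i`. -/
noncomputable def ucap {m p : ℕ} (sA sB sG : Fin m → Prop) : UGadV m p → UGadV m p → ℕ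
  | .src, .bl i => if ¬ sA i ∧ ¬ sB i then 1 else 0
  | .src, .br i => if sA i ∨ sB i then 1 else 0
  | .bl i, .snk => if ¬ sA i ∧ ¬ sB i ∧ ¬ sG i then 1 else 0
  | .bl i, .br j => if i = j then 1 else 0
  | .br _, .bp => 1
  | .bp, .bpj _ => 1
  | .bpj _, .snk => 1
  | _, _ => 0

/-!
Flow conservation makes the value of any `α`-`γ` flow at most the flow entering `γ`, hence at
most the total capacity of the edges into `γ`. In `G_p^{α,β,γ}` these are one edge `β_i^l → γ`
for each clause violated by all of `α`, `β`, `γ`, and the `p - 1` edges `β'_j → γ`; so when at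
least `p` clauses are satisfied the capacity into `γ` is at most `(m - p) + (p - 1) = m - 1`.
-/

open Finset

theorem Finset.card_filter_not_le_of_le_card_filter {α : Type*} (s : Finset α) (P : α → Prop)
    [DecidablePred P] {k : ℕ} (h : k ≤ #(s.filter P)) : #(s.filter (¬P ·)) ≤ #s - k := by
  have := s.card_filter_add_card_filter_not P
  omega

section Flow

variable {V : Type*} [Fintype V] {cap : V → V → ℕ} {s t : V} {f : V → V → ℕ}

theorem IsFlow.value_le_inflow (hf : IsFlow cap s t f) (hst : s ≠ t) {x : ℕ}
    (hx : ∑ v, f s v = x + ∑ v, f v s) : x ≤ ∑ u, f u t := by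
  have hsplit : ∀ h : V → ℕ, ∑ v, h v = h s + h t + ∑ v ∈ (univ.erase s).erase t, h v := by
    intro h
    rw [add_assoc, Finset.add_sum_erase _ _ (mem_erase.2 ⟨hst.symm, mem_univ t⟩),
      Finset.add_sum_erase _ _ (mem_univ s)]
  have hbalance : ∑ v ∈ (univ.erase s).erase t, ∑ u, f u v
      = ∑ v ∈ (univ.erase s).erase t, ∑ u, f v u :=
    sum_congr rfl fun v hv => by
      obtain ⟨hvt, hvs, -⟩ := by simpa only [mem_erase] using hv
      exact hf.2 v hvs hvt
  have htotal : ∑ v, ∑ u, f u v = ∑ v, ∑ u, f v u := sum_comm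
  rw [hsplit (fun v => ∑ u, f u v), hsplit (fun v => ∑ u, f v u), hbalance] at htotal
  omega

theorem maxFlow_le_sum_cap_into (hst : s ≠ t) : maxFlow cap s t ≤ ∑ u, cap u t :=
  csSup_le' fun _ ⟨_, hf, hx⟩ =>
    (hf.value_le_inflow hst hx).trans (sum_le_sum fun u _ => hf.1 u t)

end Flow

theorem sum_ucap_into_snk {m p : ℕ} (sA sB sG : Fin m → Prop) :
    ∑ u, ucap (p := p) sA sB sG u .snk
      = #(univ.filter fun i => ¬(sA i ∨ sB i ∨ sG i)) + (p - 1) := by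
  have hinj : Function.Injective (Sum.elim (UGadV.bl (p := p)) (UGadV.bpj (m := m))) := by
    rintro (_ | _) (_ | _) h <;> simp_all
  rw [← Fintype.sum_of_injective _ hinj _ _ ?_ fun _ => rfl]
  · simp only [Fintype.sum_sum_type, Sum.elim_inl, Sum.elim_inr, ucap,
      card_filter, not_or]
    simp
  · rintro (_ | _ | _ | i | _ | j) hv <;> simp only [ucap]
    · exact absurd ⟨.inl i, rfl⟩ hv
    · exact absurd ⟨.inr j, rfl⟩ hv

/-- if the combined assignment `(α, β, γ)` satisfies at least `p` of the
`m` clauses, then the maximum `α`-`γ` flow in `G_p^{α,β,γ}` is at most `m - 1`. -/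
theorem stmt7 {U1 U2 U3 : Type*} {m : ℕ} (F : Fin m → Clause3 U1 U2 U3)
    (a : U1 → Bool) (b : U2 → Bool) (g : U3 → Bool) (p : ℕ)
    (hp1 : 1 ≤ p) (hpm : p ≤ m)
    (hsat : p ≤ (Finset.univ.filter fun i =>
        sat3A a (F i) ∨ sat3B b (F i) ∨ sat3G g (F i)).card) :
    maxFlow
        (ucap (m := m) (p := p) (fun i => sat3A a (F i)) (fun i => sat3B b (F i))
          (fun i => sat3G g (F i)))
        UGadV.src UGadV.snk ≤ m - 1 := by
  have hunsat := univ.card_filter_not_le_of_le_card_filter _ hsat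
  rw [card_univ, Fintype.card_fin] at hunsat
  calc _ ≤ _ := maxFlow_le_sum_cap_into (by simp)
    _ = _ := sum_ucap_into_snk _ _ _
    _ ≤ m - p + (p - 1) := by gcongr
    _ ≤ m - 1 := by omega
end

section
/- Let F be a CNF formula and suppose for each p ∈ [m] we have a graph G_p and a designated pair set P such that: (i) if some total assignment satisfies at least p clauses then some pair in P has max flow at most K − 1 in G_p, and (ii) if every total assignment satisfies at most p − 1 clauses then every pair in P has max flow at least K in G_p. Then the maximum number of simultaneously satisfiable clauses of F equals the largest p ∈ [m] such that some pair in P has max flow at most K − 1 in G_p (and equals 0 if no such p exists). -/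
attribute [local instance] Classical.propDecidable

/-!
Let `M` be the maximum number of satisfiable clauses. For `p ∈ [1, m]`, hypothesis (i) says
that some pair has small max flow in `G_p` when `p ≤ M`, and (ii) together with `1 ≤ K` says
that no pair does when `p > M`. So the set of thresholds with a small flow is exactly `[1, M]`,
whose supremum is `M` (also when `M = 0` and the set is empty).
-/

theorem Nat.sSup_setOf_mem_Icc_of_iff_le {m M : ℕ} {Q : ℕ → Prop} (hM : M ≤ m)
    (hQ : ∀ p ∈ Finset.Icc 1 m, Q p ↔ p ≤ M) :
    sSup {p | p ∈ Finset.Icc 1 m ∧ Q p} = M := by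
  have hset : {p | p ∈ Finset.Icc 1 m ∧ Q p} = Set.Icc 1 M := by
    ext p
    simp only [Set.mem_ofPred_eq, Set.mem_Icc, Finset.mem_Icc]
    constructor
    · rintro ⟨hp, hQp⟩
      exact ⟨hp.1, (hQ p (Finset.mem_Icc.2 hp)).1 hQp⟩
    · rintro ⟨h1p, hpM⟩
      exact ⟨⟨h1p, hpM.trans hM⟩, (hQ p (Finset.mem_Icc.2 ⟨h1p, hpM.trans hM⟩)).2 hpM⟩
  rw [hset]
  rcases Nat.eq_zero_or_pos M with rfl | hpos
  · simp
  · exact csSup_Icc hpos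

theorem Nat.iff_le_ciSup_of_imp {ι : Type*} {f : ι → ℕ} (hf : BddAbove (Set.range f))
    {Q : ℕ → Prop} {p : ℕ} (hp : 1 ≤ p) (hle : (∃ a, p ≤ f a) → Q p)
    (hgt : (∀ a, f a ≤ p - 1) → ¬ Q p) :
    Q p ↔ p ≤ ⨆ a, f a := by
  constructor
  · intro hQp
    by_contra! hlt
    exact hgt (fun a => Nat.le_sub_one_of_lt ((le_ciSup hf a).trans_lt hlt)) hQp
  · intro hpM
    obtain ⟨a, ha⟩ := exists_lt_of_lt_ciSup' (Nat.sub_one_lt_of_le hp hpM)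
    exact hle ⟨a, by omega⟩

theorem stmt14_general {V A : Type*} [Fintype V]
    (m K : ℕ) (hK : 1 ≤ K)
    (cap : ℕ → V → V → ℕ) (P : Finset (V × V))
    (satCount : A → ℕ) (hm : ∀ a, satCount a ≤ m)
    (h1 : ∀ p ∈ Finset.Icc 1 m, (∃ a, p ≤ satCount a) →
      ∃ q ∈ P, maxFlow (cap p) q.1 q.2 ≤ K - 1)
    (h2 : ∀ p ∈ Finset.Icc 1 m, (∀ a, satCount a ≤ p - 1) →
      ∀ q ∈ P, K ≤ maxFlow (cap p) q.1 q.2) :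
    (⨆ a, satCount a) =
      sSup {p : ℕ | p ∈ Finset.Icc 1 m ∧ ∃ q ∈ P, maxFlow (cap p) q.1 q.2 ≤ K - 1} := by
  have hbdd : BddAbove (Set.range satCount) := ⟨m, Set.forall_mem_range.2 hm⟩
  refine (Nat.sSup_setOf_mem_Icc_of_iff_le (ciSup_le' hm) fun p hp => ?_).symm
  refine Nat.iff_le_ciSup_of_imp (Q := fun p => ∃ q ∈ P, maxFlow (cap p) q.1 q.2 ≤ K - 1)
    hbdd (Finset.mem_Icc.1 hp).1 (h1 p hp) ?_
  rintro hall ⟨q, hq, hsmall⟩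
  have hlarge := h2 p hp hall q hq
  omega

/-- suppose for each `p ∈ [m]` there is a graph `G_p` (capacities
`cap p`) and a designated pair set `P` such that (i) if some total assignment satisfies
at least `p` clauses then some pair in `P` has max flow at most `K − 1` in `G_p`, and
(ii) if every total assignment satisfies at most `p − 1` clauses then every pair in `P`
has max flow at least `K` in `G_p`. Then the maximum number of simultaneously
satisfiable clauses equals the largest `p ∈ [m]` for which some pair in `P` has max
flow at most `K − 1` in `G_p` (and `0` if no such `p` exists). -/
theorem stmt14 {V A : Type*} [Fintype V] [Fintype A] [Nonempty A]
    (m K : ℕ) (hK : 1 ≤ K)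
    (cap : ℕ → V → V → ℕ) (P : Finset (V × V))
    (satCount : A → ℕ) (hm : ∀ a, satCount a ≤ m)
    (h1 : ∀ p ∈ Finset.Icc 1 m, (∃ a, p ≤ satCount a) →
      ∃ q ∈ P, maxFlow (cap p) q.1 q.2 ≤ K - 1)
    (h2 : ∀ p ∈ Finset.Icc 1 m, (∀ a, satCount a ≤ p - 1) →
      ∀ q ∈ P, K ≤ maxFlow (cap p) q.1 q.2) :
    (⨆ a, satCount a) =
      sSup {p : ℕ | p ∈ Finset.Icc 1 m ∧ ∃ q ∈ P, maxFlow (cap p) q.1 q.2 ≤ K - 1} :=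
  stmt14_general m K hK cap P satCount hm h1 h2
end
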